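/- arXiv:2303.15476 — 2 statements merged into one kernel-verified Lean document; each statement's English description precedes it below -/
import Mathlib

section
/- The explicit edge-coloring of K_13 given by the symmetric matrix M (rows: [0,2,5,4,1,3,3,6,4,2,6,5,1], [2,0,3,6,5,6,4,1,3,1,4,5,2], [5,3,0,5,4,2,6,3,1,6,2,1,4], [4,6,5,0,2,4,5,2,1,3,3,1,6], [1,5,4,2,0,3,1,6,2,5,4,6,3], [3,6,2,4,3,0,1,4,5,6,5,2,1], [3,4,6,5,1,1,0,2,5,4,2,6,3], [6,1,3,2,6,4,2,0,3,5,1,4,5], [4,3,1,1,2,5,5,3,0,4,6,2,6], [2,1,6,3,5,6,4,5,4,0,1,3,2], [6,4,2,3,4,5,2,1,6,1,0,3,5], [5,5,1,1,6,2,6,4,2,3,3,0,4], [1,2,4,6,3,1,3,5,6,2,5,4,0]) contains no rainbow K_4: for every 4-element subset {a,b,c,d} of the 13 vertices, the six values M[a][b], M[a][c], M[a][d], M[b][c], M[b][d], M[c][d] are not pairwise distinct. -/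
def M : Fin 13 → Fin 13 → ℕ :=
  ![![0,2,5,4,1,3,3,6,4,2,6,5,1],
    ![2,0,3,6,5,6,4,1,3,1,4,5,2],
    ![5,3,0,5,4,2,6,3,1,6,2,1,4],
    ![4,6,5,0,2,4,5,2,1,3,3,1,6],
    ![1,5,4,2,0,3,1,6,2,5,4,6,3],
    ![3,6,2,4,3,0,1,4,5,6,5,2,1],
    ![3,4,6,5,1,1,0,2,5,4,2,6,3],
    ![6,1,3,2,6,4,2,0,3,5,1,4,5],
    ![4,3,1,1,2,5,5,3,0,4,6,2,6],
    ![2,1,6,3,5,6,4,5,4,0,1,3,2],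
    ![6,4,2,3,4,5,2,1,6,1,0,3,5],
    ![5,5,1,1,6,2,6,4,2,3,3,0,4],
    ![1,2,4,6,3,1,3,5,6,2,5,4,0]]

/-!
Rainbowness of a 4-set under a symmetric coloring does not depend on the order in which its
vertices are listed, so it suffices to check the increasing quadruples of vertices; for `M`
this is a finite computation.
-/

section
variable {V α : Type*}

def IsRainbowK4 (χ : V → V → α) (a b c d : V) : Prop :=
  [χ a b, χ a c, χ a d, χ b c, χ b d, χ c d].Nodup

def RainbowK4Free (χ : V → V → α) : Prop :=
  ∀ a b c d, a ≠ b → a ≠ c → a ≠ d → b ≠ c → b ≠ d → c ≠ d → ¬ IsRainbowK4 χ a b c d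

variable {χ : V → V → α}

theorem isRainbowK4_swap_01 (hχ : ∀ x y, χ x y = χ y x) {a b c d : V} :
    IsRainbowK4 χ b a c d ↔ IsRainbowK4 χ a b c d := by
  simp only [IsRainbowK4, hχ b a, List.nodup_cons, List.mem_cons, List.not_mem_nil]
  grind

theorem isRainbowK4_swap_12 (hχ : ∀ x y, χ x y = χ y x) {a b c d : V} :
    IsRainbowK4 χ a c b d ↔ IsRainbowK4 χ a b c d := by
  simp only [IsRainbowK4, hχ c b, List.nodup_cons, List.mem_cons, List.not_mem_nil]
  grind

theorem isRainbowK4_swap_23 (hχ : ∀ x y, χ x y = χ y x) {a b c d : V} :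
    IsRainbowK4 χ a b d c ↔ IsRainbowK4 χ a b c d := by
  simp only [IsRainbowK4, hχ d c, List.nodup_cons, List.mem_cons, List.not_mem_nil]
  grind

theorem rainbowK4Free_of_forall_lt [LinearOrder V] (hχ : ∀ x y, χ x y = χ y x)
    (h : ∀ a b c d, a < b → b < c → c < d → ¬ IsRainbowK4 χ a b c d) : RainbowK4Free χ := by
  intro a b c d hab hac had hbc hbd hcd
  -- sort the vertices with the comparator network (a,b), (c,d), (a,c), (b,d), (b,c)
  wlog hab' : a < b generalizing a b c d
  · rw [← isRainbowK4_swap_01 hχ]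
    exact this b a c d hab.symm hbc hbd hac had hcd (hab.lt_or_gt.resolve_left hab')
  wlog hcd' : c < d generalizing a b c d
  · rw [← isRainbowK4_swap_23 hχ]
    exact this a b d c hab had hac hbd hbc hcd.symm hab' (hcd.lt_or_gt.resolve_left hcd')
  wlog hac' : a < c generalizing a b c d
  · rw [← isRainbowK4_swap_12 hχ, ← isRainbowK4_swap_01 hχ, ← isRainbowK4_swap_23 hχ,
      ← isRainbowK4_swap_12 hχ]
    exact this c d a b hcd hac.symm hbc.symm had.symm hbd.symm hab hcd' hab'
      (hac.lt_or_gt.resolve_left hac')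
  wlog hbd' : b < d generalizing a b c d
  · rw [← isRainbowK4_swap_12 hχ, ← isRainbowK4_swap_23 hχ, ← isRainbowK4_swap_12 hχ]
    have hdb := hbd.lt_or_gt.resolve_left hbd'
    exact this a d c b had hac hab hcd.symm hbd.symm hbc.symm (hac'.trans hcd') (hcd'.trans hdb)
      hac' hdb
  wlog hbc' : b < c generalizing a b c d
  · rw [← isRainbowK4_swap_12 hχ]
    exact this a c b d hac hab had hbc.symm hcd hbd hac' hbd' hab' hcd'
      (hbc.lt_or_gt.resolve_left hbc')
  exact h a b c d hab' hbc' hcd'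

end

theorem M_symm : ∀ x y, M x y = M y x := by decide

theorem M_not_isRainbowK4_of_lt :
    ∀ a b c d : Fin 13, a < b → b < c → c < d → ¬ IsRainbowK4 M a b c d := by
  unfold IsRainbowK4
  decide

/-- The explicit coloring of K₁₃ given by M contains no rainbow K₄. -/
theorem M_no_rainbow_K4 :
    ∀ a b c d : Fin 13, a ≠ b → a ≠ c → a ≠ d → b ≠ c → b ≠ d → c ≠ d →
      ¬ ([M a b, M a c, M a d, M b c, M b d, M c d] : List ℕ).Nodup := by
  exact rainbowK4Free_of_forall_lt M_symm M_not_isRainbowK4_of_lt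
end

section
/- If there exists a balanced edge-coloring of K_n with ℓ colors and no rainbow K_q, then for every positive integer k there exists a balanced edge-coloring of K_{n^k} with ℓ colors and no rainbow K_q. -/
/-- An edge-coloring (given as a symmetric function) is balanced if every vertex is
incident to each color the same number of times. -/
def IsBalanced {n ℓ : ℕ} (c : Fin n → Fin n → Fin ℓ) : Prop :=
  (∀ i j, c i j = c j i) ∧
  ∃ t : ℕ, ∀ v : Fin n, ∀ col : Fin ℓ,
    (Finset.univ.filter (fun j => j ≠ v ∧ c v j = col)).card = t

/-- The set `s` is rainbow for the coloring `c`: distinct edges inside `s` get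
distinct colors. -/
def IsRainbowOn {V : Type*} [DecidableEq V] {ℓ : ℕ} (c : V → V → Fin ℓ)
    (s : Finset V) : Prop :=
  ∀ a ∈ s, ∀ b ∈ s, ∀ a' ∈ s, ∀ b' ∈ s,
    a ≠ b → a' ≠ b' → ({a, b} : Finset V) ≠ {a', b'} → c a b ≠ c a' b'

/-- The coloring `c` contains a rainbow copy of K_q. -/
def HasRainbowClique {V : Type*} [DecidableEq V] {ℓ : ℕ} (c : V → V → Fin ℓ)
    (q : ℕ) : Prop :=
  ∃ s : Finset V, s.card = q ∧ IsRainbowOn c s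


/-!
Lexicographic product: on `V × W`, colour an edge inside a block `{a} × W` by the colouring of
`W` and an edge between blocks by the colouring of `V` on the block indices. If every vertex sees
each colour `t` times in `V` and `t'` times in `W`, then `(a, x)` sees it `t * |W| + t'` times.
A rainbow set meeting two distinct vertices of one block lies in that block, since otherwise a
vertex `w` outside it would see both in the same colour. So a rainbow set either meets each
block at most once, projecting to a rainbow set of `V`, or lies in one block, projecting to a
rainbow set of `W`. Iterating gives `n ^ k`.
-/

open Finset Function

section Coloring

variable {V W κ : Type*} [Fintype V] [Fintype W] [DecidableEq V] [DecidableEq W] [DecidableEq κ]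

def IsRegularColoring (c : V → V → κ) (t : ℕ) : Prop :=
  (∀ u v, c u v = c v u) ∧ ∀ v col, #{j | j ≠ v ∧ c v j = col} = t

theorem isBalanced_iff_exists_isRegularColoring {n ℓ : ℕ} (c : Fin n → Fin n → Fin ℓ) :
    IsBalanced c ↔ ∃ t, IsRegularColoring c t :=
  exists_and_left.symm

theorem IsRegularColoring.comp_equiv {c : V → V → κ} {t : ℕ} (hc : IsRegularColoring c t)
    (e : W ≃ V) : IsRegularColoring (fun u v => c (e u) (e v)) t := by
  refine ⟨fun u v => hc.1 (e u) (e v), fun v col => ?_⟩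
  rw [← hc.2 (e v) col]
  exact card_equiv e fun j => by simp

def lexColoring (c : V → V → κ) (c' : W → W → κ) (p r : V × W) : κ :=
  if p.1 = r.1 then c' p.2 r.2 else c p.1 r.1

theorem IsRegularColoring.lexColoring {c : V → V → κ} {c' : W → W → κ} {t t' : ℕ}
    (hc : IsRegularColoring c t) (hc' : IsRegularColoring c' t') :
    IsRegularColoring (lexColoring c c') (t * Fintype.card W + t') := by
  refine ⟨fun p r => ?_, fun ⟨a, x⟩ col => ?_⟩
  · by_cases h : p.1 = r.1
    · simp only [_root_.lexColoring, h, if_true]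
      exact hc'.1 _ _
    · simp only [_root_.lexColoring, h, Ne.symm h, if_false]
      exact hc.1 _ _
  have hsplit : univ.filter (fun p => p ≠ (a, x) ∧ _root_.lexColoring c c' (a, x) p = col)
      = ({b | b ≠ a ∧ c a b = col} : Finset V) ×ˢ (univ : Finset W)
        ∪ ({a} : Finset V) ×ˢ ({y | y ≠ x ∧ c' x y = col} : Finset W) := by
    ext ⟨b, y⟩
    by_cases hb : a = b
    · subst hb; simp [_root_.lexColoring]
    · simp [_root_.lexColoring, hb, Ne.symm hb]
  rw [hsplit, card_union_of_disjoint, card_product, card_product, hc.2, hc'.2, card_univ,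
    card_singleton, one_mul]
  exact disjoint_left.2 fun p hp hp' => (mem_filter.1 (mem_product.1 hp).1).2.1
    (mem_singleton.1 (mem_product.1 hp').1)

end Coloring

section Rainbow

variable {V W : Type*} [DecidableEq V] [DecidableEq W] {ℓ : ℕ}

theorem IsRainbowOn.congr {c d : V → V → Fin ℓ} {s : Finset V}
    (hcd : ∀ u ∈ s, ∀ v ∈ s, u ≠ v → c u v = d u v) (hc : IsRainbowOn c s) :
    IsRainbowOn d s := by
  intro a ha b hb a' ha' b' hb' hab hab' hne
  rw [← hcd a ha b hb hab, ← hcd a' ha' b' hb' hab']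
  exact hc a ha b hb a' ha' b' hb' hab hab' hne

theorem IsRainbowOn.image {f : V → W} {c : W → W → Fin ℓ} {s : Finset V}
    (hs : IsRainbowOn (fun u v => c (f u) (f v)) s) :
    IsRainbowOn c (s.image f) := by
  simp only [IsRainbowOn, forall_mem_image]
  intro a ha b hb a' ha' b' hb' hab hab' hne
  refine hs a ha b hb a' ha' b' hb' (fun h => hab (h ▸ rfl)) (fun h => hab' (h ▸ rfl))
    fun h => hne ?_
  simpa using congrArg (Finset.image f) h

theorem HasRainbowClique.image_of_injOn {f : V → W} {c : W → W → Fin ℓ} {s : Finset V}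
    {q : ℕ} (hf : Set.InjOn f s) (hcard : #s = q)
    (hs : IsRainbowOn (fun u v => c (f u) (f v)) s) :
    HasRainbowClique c q :=
  ⟨s.image f, by rw [card_image_of_injOn hf, hcard], hs.image⟩

theorem HasRainbowClique.of_comp {f : V → W} (hf : Injective f) {c : W → W → Fin ℓ} {q : ℕ}
    (h : HasRainbowClique (fun u v => c (f u) (f v)) q) : HasRainbowClique c q :=
  let ⟨_, hcard, hs⟩ := h
  .image_of_injOn hf.injOn hcard hs

variable {c : V → V → Fin ℓ} {c' : W → W → Fin ℓ} {s : Finset (V × W)}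

theorem IsRainbowOn.fst_eq_of_lexColoring (hs : IsRainbowOn (lexColoring c c') s)
    {u v w : V × W} (hu : u ∈ s) (hv : v ∈ s) (hw : w ∈ s) (huv : u ≠ v) (hfst : u.1 = v.1) :
    w.1 = u.1 := by
  by_contra hwu
  have hwv : w.1 ≠ v.1 := hfst ▸ hwu
  refine hs u hu w hw v hv w hw (fun h => hwu (h ▸ rfl)) (fun h => hwv (h ▸ rfl)) ?_ ?_
  · intro h
    have : u ∈ ({v, w} : Finset (V × W)) := h ▸ mem_insert_self u {w}
    rcases mem_insert.1 this with h' | h'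
    · exact huv h'
    · exact hwu (mem_singleton.1 h' ▸ rfl)
  · simp [lexColoring, Ne.symm hwv, hfst]

theorem IsRainbowOn.injOn_fst_or_fst_eq_of_lexColoring
    (hs : IsRainbowOn (lexColoring c c') s) :
    Set.InjOn Prod.fst (s : Set (V × W)) ∨ ∀ u ∈ s, ∀ v ∈ s, u.1 = v.1 := by
  refine or_iff_not_imp_right.2 fun hspread u hu v hv hfst => by_contra fun huv => hspread ?_
  exact fun w hw w' hw' => (hs.fst_eq_of_lexColoring hu hv hw huv hfst).trans
    (hs.fst_eq_of_lexColoring hu hv hw' huv hfst).symm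

theorem not_hasRainbowClique_lexColoring {q : ℕ} (hc : ¬ HasRainbowClique c q)
    (hc' : ¬ HasRainbowClique c' q) : ¬ HasRainbowClique (lexColoring c c') q := by
  rintro ⟨s, hcard, hs⟩
  rcases IsRainbowOn.injOn_fst_or_fst_eq_of_lexColoring hs with hinj | hblock
  · refine hc (.image_of_injOn hinj hcard (hs.congr fun u hu v hv huv => ?_))
    simp [lexColoring, hinj.ne hu hv huv]
  · have hinj : Set.InjOn Prod.snd (s : Set (V × W)) :=
      fun u hu v hv h => Prod.ext (hblock u hu v hv) h
    refine hc' (.image_of_injOn hinj hcard (hs.congr fun u hu v hv _ => ?_))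
    simp [lexColoring, hblock u hu v hv]

end Rainbow

def HasBalancedRainbowFreeColoring (ℓ q : ℕ) (V : Type*) [Fintype V] [DecidableEq V] : Prop :=
  ∃ (c : V → V → Fin ℓ) (t : ℕ), IsRegularColoring c t ∧ ¬ HasRainbowClique c q

namespace HasBalancedRainbowFreeColoring

variable {ℓ q : ℕ} {V W : Type*} [Fintype V] [Fintype W] [DecidableEq V] [DecidableEq W]

theorem of_equiv (h : HasBalancedRainbowFreeColoring ℓ q V) (e : W ≃ V) :
    HasBalancedRainbowFreeColoring ℓ q W :=
  let ⟨_, t, hreg, hfree⟩ := h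
  ⟨_, t, hreg.comp_equiv e, fun hR => hfree (hR.of_comp e.injective)⟩

theorem prod (h : HasBalancedRainbowFreeColoring ℓ q V)
    (h' : HasBalancedRainbowFreeColoring ℓ q W) : HasBalancedRainbowFreeColoring ℓ q (V × W) :=
  let ⟨_, _, hreg, hfree⟩ := h
  let ⟨_, _, hreg', hfree'⟩ := h'
  ⟨_, _, hreg.lexColoring hreg', not_hasRainbowClique_lexColoring hfree hfree'⟩

theorem fin_iff {n : ℕ} : HasBalancedRainbowFreeColoring ℓ q (Fin n) ↔
    ∃ c : Fin n → Fin n → Fin ℓ, IsBalanced c ∧ ¬ HasRainbowClique c q := by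
  simp only [HasBalancedRainbowFreeColoring, isBalanced_iff_exists_isRegularColoring,
    exists_and_right]

end HasBalancedRainbowFreeColoring

/-- If K_n has a balanced ℓ-coloring with no rainbow K_q, then so does K_{n^k}
for every k ≥ 1. -/
theorem balanced_no_rainbow_pow (n ℓ q : ℕ)
    (h : ∃ c : Fin n → Fin n → Fin ℓ, IsBalanced c ∧ ¬ HasRainbowClique c q) :
    ∀ k : ℕ, 0 < k →
      ∃ c : Fin (n ^ k) → Fin (n ^ k) → Fin ℓ,
        IsBalanced c ∧ ¬ HasRainbowClique c q := by
  intro k hk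
  rw [← HasBalancedRainbowFreeColoring.fin_iff] at h ⊢
  induction k, hk using Nat.le_induction with
  | base => exact h.of_equiv (finCongr (pow_one n))
  | succ k _ ih =>
    exact (ih.prod h).of_equiv ((finCongr (pow_succ n k)).trans finProdFinEquiv.symm)
end
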